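/- arXiv:1603.05097 — 3 statements merged into one kernel-verified Lean document; each statement's English description precedes it below -/
import Mathlib

section
/- Let G be a connected undirected graph on N vertices with edge set E, incidence matrix D(G) and Laplacian L(G) = D(G) D(G)^T, whose second smallest eigenvalue λ₂(G) is positive. Let v_max > 0 and let K₂ = 2 √N (N−1) ‖D(G)^T‖ / λ₂(G)², where ‖·‖ denotes the operator norm. Suppose x_i : [0,∞) → ℝⁿ, i = 1,…,N, are differentiable and satisfy the coupled dynamics ẋ_i(t) = −∑_{j ∈ N(i)} (x_i(t) − x_j(t)) + v_i(t), where N(i) is the set of neighbors of vertex i and the inputs satisfy ‖v_i(t)‖ ≤ v_max for all i and all t ≥ 0. Let x̃(t) ∈ ℝ^{|E|n} be the stacked vector of edge differences x_i(t) − x_j(t) over the edges {i,j} ∈ E. Then for every constant R̄ > K₂ v_max and every initial condition, there exists a time T > 0 such that ‖x̃(t)‖ ≤ R̄ for all t ≥ T. -/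
open scoped BigOperators
open Matrix

/-- The oriented incidence matrix of a graph whose `m` edges are enumerated by
the endpoint maps `a b : Fin m → Fin N` (edge `e` goes from `a e` to `b e`). -/
noncomputable def incidenceMat {N m : ℕ} (a b : Fin m → Fin N) :
    Matrix (Fin N) (Fin m) ℝ :=
  Matrix.of fun i e => if i = a e then 1 else if i = b e then -1 else 0

/-- The operator norm (induced by the Euclidean norms) of a real matrix. -/
noncomputable def matOpNorm {N m : ℕ} (A : Matrix (Fin N) (Fin m) ℝ) : ℝ :=
  ‖LinearMap.toContinuousLinearMap (Matrix.toEuclideanLin A)‖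

open scoped RealInnerProductSpace
open Filter Topology

/-!
Let `δᵢ = xᵢ - x̄` be the deviation of agent `i` from the average. Along the dynamics
`V = ∑ ‖δᵢ‖²` satisfies `V' = -2 ∑ₑ ‖δ_{a e} - δ_{b e}‖² + 2 ∑ ⟪δᵢ, vᵢ⟫`. Since `∑ δᵢ = 0`, the
variational characterization of `λ₂` bounds the first sum below by `λ₂ V`, and Young's inequality
bounds the second by `λ₂ V + N vmax² / λ₂`; hence `V' ≤ -λ₂ V + N vmax² / λ₂` and, by Grönwall,
`V` is eventually below any level exceeding `N vmax² / λ₂²`. As `x̃ = Dᵀ δ`, `‖x̃‖ ≤ ‖Dᵀ‖ √V` is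
eventually below any `R̄ > √N ‖Dᵀ‖ vmax / λ₂`, and this bound is at most `K₂ vmax` because testing
the variational inequality on `e_u - e_w` gives `λ₂ ≤ 2 (N - 1)` as soon as there is an edge.
-/

section Incidence

variable {N m : ℕ} {a b : Fin m → Fin N}

theorem incidenceMat_transpose_mulVec (hab : ∀ e, a e ≠ b e) (y : Fin N → ℝ) (e : Fin m) :
    ((incidenceMat a b)ᵀ *ᵥ y) e = y (a e) - y (b e) := by
  have h : ∀ i, incidenceMat a b i e =
      (Pi.single (a e) 1 : Fin N → ℝ) i - (Pi.single (b e) 1 : Fin N → ℝ) i := by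
    intro i
    have := hab e
    simp only [incidenceMat, of_apply, Pi.single_apply]
    split_ifs <;> grind
  simp [mulVec, dotProduct, h, sub_mul, Finset.sum_sub_distrib, Pi.single_apply]

theorem dotProduct_incidenceMat_mul_transpose_mulVec (hab : ∀ e, a e ≠ b e) (y : Fin N → ℝ) :
    y ⬝ᵥ (incidenceMat a b * (incidenceMat a b)ᵀ) *ᵥ y = ∑ e, (y (a e) - y (b e)) ^ 2 := by
  rw [← mulVec_mulVec, dotProduct_mulVec, ← mulVec_transpose]
  simp [dotProduct, incidenceMat_transpose_mulVec hab, sq]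

theorem sum_sq_sub_le_matOpNorm_sq (hab : ∀ e, a e ≠ b e) (y : Fin N → ℝ) :
    ∑ e, (y (a e) - y (b e)) ^ 2 ≤ matOpNorm (incidenceMat a b)ᵀ ^ 2 * ∑ i, y i ^ 2 := by
  let A := LinearMap.toContinuousLinearMap (toEuclideanLin (incidenceMat a b)ᵀ)
  let z : EuclideanSpace ℝ (Fin N) := WithLp.toLp 2 y
  have hAz : ‖A z‖ ^ 2 = ∑ e, (y (a e) - y (b e)) ^ 2 := by
    simp [A, z, EuclideanSpace.real_norm_sq_eq, incidenceMat_transpose_mulVec hab]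
  have hz : ‖z‖ ^ 2 = ∑ i, y i ^ 2 := by simp [z, EuclideanSpace.real_norm_sq_eq]
  rw [← hAz, ← hz, ← mul_pow]
  exact pow_le_pow_left₀ (norm_nonneg _) (A.le_opNorm z) 2

end Incidence

section Coordinates

variable {ι V κ : Type*} [Fintype ι] [Fintype κ] {a b : ι → V}

theorem sum_norm_sq_sub_eq_sum_sum_sq (w : V → EuclideanSpace ℝ κ) :
    ∑ e, ‖w (a e) - w (b e)‖ ^ 2 = ∑ k, ∑ e, (w (a e) k - w (b e) k) ^ 2 := by
  simp_rw [EuclideanSpace.real_norm_sq_eq, PiLp.sub_apply]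
  exact Finset.sum_comm

theorem le_sum_norm_sq_sub_of_forall_real [Fintype V] {c : ℝ}
    (h : ∀ y : V → ℝ, ∑ i, y i = 0 → c * ∑ i, y i ^ 2 ≤ ∑ e, (y (a e) - y (b e)) ^ 2)
    (w : V → EuclideanSpace ℝ κ) (hw : ∑ i, w i = 0) :
    c * ∑ i, ‖w i‖ ^ 2 ≤ ∑ e, ‖w (a e) - w (b e)‖ ^ 2 := by
  simp_rw [sum_norm_sq_sub_eq_sum_sum_sq, EuclideanSpace.real_norm_sq_eq]
  rw [Finset.sum_comm, Finset.mul_sum]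
  refine Finset.sum_le_sum fun k _ => h (fun i => w i k) ?_
  simpa using congrArg (· k) hw

theorem sum_norm_sq_sub_le_of_forall_real [Fintype V] {c : ℝ}
    (h : ∀ y : V → ℝ, ∑ e, (y (a e) - y (b e)) ^ 2 ≤ c * ∑ i, y i ^ 2)
    (w : V → EuclideanSpace ℝ κ) :
    ∑ e, ‖w (a e) - w (b e)‖ ^ 2 ≤ c * ∑ i, ‖w i‖ ^ 2 := by
  simp_rw [sum_norm_sq_sub_eq_sum_sum_sq, EuclideanSpace.real_norm_sq_eq]
  rw [Finset.sum_comm (s := Finset.univ (α := V)), Finset.mul_sum]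
  exact Finset.sum_le_sum fun k _ => h fun i => w i k

end Coordinates

theorem le_gronwallBound_of_hasDerivAt {g g' : ℝ → ℝ} {K ε : ℝ}
    (hg : ∀ t, 0 ≤ t → HasDerivAt g (g' t) t) (hle : ∀ t, 0 ≤ t → g' t ≤ K * g t + ε)
    {t : ℝ} (ht : 0 ≤ t) : g t ≤ gronwallBound (g 0) K ε t := by
  simpa using le_gronwallBound_of_liminf_deriv_right_le (a := 0) (b := t) (f' := g')
    (fun s hs => (hg s hs.1).continuousAt.continuousWithinAt)
    (fun s hs _ hr => (hg s hs.1).hasDerivWithinAt.liminf_right_slope_le hr) le_rfl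
    (fun s hs => hle s hs.1) t ⟨ht, le_rfl⟩

theorem tendsto_gronwallBound_atTop {δ K ε : ℝ} (hK : K < 0) :
    Tendsto (gronwallBound δ K ε) atTop (𝓝 (-ε / K)) := by
  rw [gronwallBound_of_K_ne_0 hK.ne]
  have hexp : Tendsto (fun x => Real.exp (K * x)) atTop (𝓝 0) :=
    Real.tendsto_exp_atBot.comp (tendsto_id.const_mul_atTop_of_neg hK)
  convert (hexp.const_mul δ).add ((hexp.sub_const 1).const_mul (ε / K)) using 2
  ring

def SimpleGraph.EnumeratesEdges {V ι : Type*} (G : SimpleGraph V) (a b : ι → V) : Prop :=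
  (∀ e, G.Adj (a e) (b e)) ∧ ∀ u v, G.Adj u v → ∃! e, s(a e, b e) = s(u, v)

namespace SimpleGraph.EnumeratesEdges

variable {V ι : Type*} [Fintype V] [Fintype ι] {G : SimpleGraph V} [DecidableRel G.Adj]
  {a b : ι → V}

theorem sum_sum_neighborFinset {M : Type*} [AddCommMonoid M] (h : G.EnumeratesEdges a b)
    (F : V → V → M) :
    ∑ i, ∑ j ∈ G.neighborFinset i, F i j = ∑ e, (F (a e) (b e) + F (b e) (a e)) := by
  let dart : ι × Bool → V × V := fun q => if q.2 then (a q.1, b q.1) else (b q.1, a q.1)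
  have hdart : ∀ q, s((dart q).1, (dart q).2) = s(a q.1, b q.1) := by
    rintro ⟨e, _ | _⟩ <;> simp [dart, Sym2.eq_swap]
  calc ∑ i, ∑ j ∈ G.neighborFinset i, F i j
      = ∑ p ∈ Finset.univ.filter (fun p : V × V => G.Adj p.1 p.2), F p.1 p.2 := by
        rw [Finset.sum_filter, Fintype.sum_prod_type]
        simp [neighborFinset_eq_filter, Finset.sum_filter]
    _ = ∑ q : ι × Bool, F (dart q).1 (dart q).2 := by
        symm
        refine Finset.sum_bij (fun q _ => dart q) ?_ ?_ ?_ fun _ _ => rfl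
        · rintro ⟨e, _ | _⟩ - <;> simp [dart, h.1 e, (h.1 e).symm]
        · rintro ⟨e, s⟩ - ⟨e', s'⟩ - heq
          have he : e = e' := by
            have := congrArg (fun p : V × V => s(p.1, p.2)) heq
            simp only [hdart] at this
            exact (h.2 _ _ (h.1 e)).unique rfl this.symm
          subst he
          have := (h.1 e).ne
          cases s <;> cases s' <;> simp_all [dart, Prod.ext_iff]
        · rintro ⟨u, v⟩ huv
          simp only [Finset.mem_filter, Finset.mem_univ, true_and] at huv
          obtain ⟨e, he, -⟩ := h.2 u v huv
          rcases Sym2.eq_iff.1 he with ⟨rfl, rfl⟩ | ⟨rfl, rfl⟩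
          · exact ⟨(e, true), Finset.mem_univ _, rfl⟩
          · exact ⟨(e, false), Finset.mem_univ _, rfl⟩
    _ = ∑ e, (F (a e) (b e) + F (b e) (a e)) := by
        simp [dart, Fintype.sum_prod_type]

theorem sum_inner_sum_neighborFinset_sub {E : Type*} [NormedAddCommGroup E]
    [InnerProductSpace ℝ E] (h : G.EnumeratesEdges a b) (w : V → E) :
    ∑ i, ⟪w i, ∑ j ∈ G.neighborFinset i, (w i - w j)⟫ = ∑ e, ‖w (a e) - w (b e)‖ ^ 2 := by
  simp_rw [inner_sum]
  rw [h.sum_sum_neighborFinset]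
  refine Finset.sum_congr rfl fun e _ => ?_
  rw [← neg_sub (w (a e)), inner_neg_right, ← sub_eq_add_neg, ← inner_sub_left,
    real_inner_self_eq_norm_sq]

theorem sum_sq_sub_le_two_mul_card_sub_one_mul (h : G.EnumeratesEdges a b) (y : V → ℝ) :
    ∑ e, (y (a e) - y (b e)) ^ 2 ≤ 2 * ((Fintype.card V : ℝ) - 1) * ∑ i, y i ^ 2 := by
  have hdeg : ∑ e, (y (a e) ^ 2 + y (b e) ^ 2) = ∑ i, (G.degree i : ℝ) * y i ^ 2 := by
    rw [← h.sum_sum_neighborFinset fun i _ => y i ^ 2]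
    simp [card_neighborFinset_eq_degree]
  have hdeg_le : ∀ i, (G.degree i : ℝ) ≤ Fintype.card V - 1 := fun i => by
    have := G.degree_lt_card_verts i
    rw [le_sub_iff_add_le]
    exact_mod_cast this
  calc ∑ e, (y (a e) - y (b e)) ^ 2 ≤ ∑ e, 2 * (y (a e) ^ 2 + y (b e) ^ 2) :=
        Finset.sum_le_sum fun e _ => by nlinarith [sq_nonneg (y (a e) + y (b e))]
    _ = 2 * ∑ i, (G.degree i : ℝ) * y i ^ 2 := by rw [← Finset.mul_sum, hdeg]
    _ ≤ 2 * ∑ i, ((Fintype.card V : ℝ) - 1) * y i ^ 2 := by gcongr with i; exact hdeg_le i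
    _ = 2 * ((Fintype.card V : ℝ) - 1) * ∑ i, y i ^ 2 := by rw [← Finset.mul_sum, mul_assoc]

theorem le_two_mul_card_sub_one [DecidableEq V] (h : G.EnumeratesEdges a b) {lam : ℝ}
    (hvar : ∀ y : V → ℝ, ∑ i, y i = 0 → lam * ∑ i, y i ^ 2 ≤ ∑ e, (y (a e) - y (b e)) ^ 2)
    {u w : V} (huw : u ≠ w) :
    lam ≤ 2 * ((Fintype.card V : ℝ) - 1) := by
  let y : V → ℝ := Pi.single u 1 - Pi.single w 1
  have hsum : ∑ i, y i = 0 := by simp [y, Finset.sum_sub_distrib]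
  have hsq : ∑ i, y i ^ 2 = 2 := by
    rw [Fintype.sum_eq_add u w huw fun i hi => by simp [y, hi.1, hi.2]]
    norm_num [y, huw, huw.symm]
  have := (hvar y hsum).trans (h.sum_sq_sub_le_two_mul_card_sub_one_mul y)
  rw [hsq] at this
  linarith

end SimpleGraph.EnumeratesEdges

section Disagreement

variable {ι E : Type*} [Fintype ι] [NormedAddCommGroup E] [InnerProductSpace ℝ E]

noncomputable def disagreement (x : ι → E) (i : ι) : E :=
  x i - (Fintype.card ι : ℝ)⁻¹ • ∑ j, x j

theorem sum_disagreement (x : ι → E) : ∑ i, disagreement x i = 0 := by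
  rcases isEmpty_or_nonempty ι with hι | hι
  · simp
  · simp [disagreement, Finset.sum_sub_distrib, ← Nat.cast_smul_eq_nsmul ℝ, smul_smul]

theorem disagreement_sub_disagreement (x : ι → E) (i j : ι) :
    disagreement x i - disagreement x j = x i - x j :=
  sub_sub_sub_cancel_right _ _ _

theorem hasDerivAt_sum_norm_sq_disagreement {x : ι → ℝ → E} {x' : ι → E} {t : ℝ}
    (hx : ∀ i, HasDerivAt (x i) (x' i) t) :
    HasDerivAt (fun s => ∑ i, ‖disagreement (fun j => x j s) i‖ ^ 2)
      (2 * ∑ i, ⟪disagreement (fun j => x j t) i, x' i⟫) t := by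
  have hδ : ∀ i, HasDerivAt (fun s => disagreement (fun j => x j s) i)
      (x' i - (Fintype.card ι : ℝ)⁻¹ • ∑ j, x' j) t := fun i =>
    (hx i).sub ((HasDerivAt.fun_sum (u := Finset.univ) fun j _ => hx j).const_smul _)
  refine (HasDerivAt.fun_sum (u := Finset.univ) fun i _ => (hδ i).norm_sq).congr_deriv ?_
  simp_rw [← Finset.mul_sum, inner_sub_right, Finset.sum_sub_distrib, ← sum_inner,
    sum_disagreement, inner_zero_left, sub_zero]

end Disagreement

namespace SimpleGraph.EnumeratesEdges

variable {V ι E : Type*} [Fintype V] [Fintype ι] [NormedAddCommGroup E] [InnerProductSpace ℝ E]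
  {G : SimpleGraph V} [DecidableRel G.Adj] {a b : ι → V}

theorem two_mul_sum_inner_le (h : G.EnumeratesEdges a b) {lam vmax : ℝ} (hlam : 0 < lam)
    (δ v : V → E) (hδ : lam * ∑ i, ‖δ i‖ ^ 2 ≤ ∑ e, ‖δ (a e) - δ (b e)‖ ^ 2)
    (hv : ∀ i, ‖v i‖ ≤ vmax) :
    2 * ∑ i, ⟪δ i, -(∑ j ∈ G.neighborFinset i, (δ i - δ j)) + v i⟫ ≤
      -lam * ∑ i, ‖δ i‖ ^ 2 + Fintype.card V * vmax ^ 2 / lam := by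
  have young : ∀ i, 2 * ⟪δ i, v i⟫ ≤ lam * ‖δ i‖ ^ 2 + vmax ^ 2 / lam := fun i => by
    have hvi : ‖v i‖ ^ 2 ≤ vmax ^ 2 := pow_le_pow_left₀ (norm_nonneg _) (hv i) 2
    have : 2 * ‖δ i‖ * ‖v i‖ ≤ lam * ‖δ i‖ ^ 2 + ‖v i‖ ^ 2 / lam := by
      rw [← sub_nonneg]
      have : lam * ‖δ i‖ ^ 2 + ‖v i‖ ^ 2 / lam - 2 * ‖δ i‖ * ‖v i‖ =
          (lam * ‖δ i‖ - ‖v i‖) ^ 2 / lam := by field_simp; ring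
      rw [this]; positivity
    have := real_inner_le_norm (δ i) (v i)
    have := div_le_div_of_nonneg_right hvi hlam.le
    linarith
  have hinput : 2 * ∑ i, ⟪δ i, v i⟫ ≤ lam * ∑ i, ‖δ i‖ ^ 2 + Fintype.card V * vmax ^ 2 / lam := by
    calc 2 * ∑ i, ⟪δ i, v i⟫ ≤ ∑ i, (lam * ‖δ i‖ ^ 2 + vmax ^ 2 / lam) := by
          rw [Finset.mul_sum]; exact Finset.sum_le_sum fun i _ => young i
      _ = _ := by simp [Finset.sum_add_distrib, Finset.mul_sum, mul_div_assoc]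
  simp_rw [inner_add_right, inner_neg_right, Finset.sum_add_distrib, Finset.sum_neg_distrib,
    h.sum_inner_sum_neighborFinset_sub]
  linarith

theorem sum_norm_sq_disagreement_le (h : G.EnumeratesEdges a b) {lam vmax : ℝ} (hlam : 0 < lam)
    (hvar : ∀ w : V → E, ∑ i, w i = 0 → lam * ∑ i, ‖w i‖ ^ 2 ≤ ∑ e, ‖w (a e) - w (b e)‖ ^ 2)
    (x v : V → ℝ → E) (hv : ∀ i t, 0 ≤ t → ‖v i t‖ ≤ vmax)
    (hdyn : ∀ i t, 0 ≤ t →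
      HasDerivAt (x i) (-(∑ j ∈ G.neighborFinset i, (x i t - x j t)) + v i t) t)
    {t : ℝ} (ht : 0 ≤ t) :
    ∑ i, ‖disagreement (fun j => x j t) i‖ ^ 2 ≤
      gronwallBound (∑ i, ‖disagreement (fun j => x j 0) i‖ ^ 2) (-lam)
        (Fintype.card V * vmax ^ 2 / lam) t := by
  refine le_gronwallBound_of_hasDerivAt
    (fun s hs => hasDerivAt_sum_norm_sq_disagreement fun i => hdyn i s hs) (fun s hs => ?_) ht
  simp_rw [← disagreement_sub_disagreement fun j => x j s]
  exact h.two_mul_sum_inner_le hlam _ _ (hvar _ (sum_disagreement _)) fun i => hv i s hs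

theorem eventually_sqrt_sum_norm_sq_sub_lt (h : G.EnumeratesEdges a b) {lam vmax M R : ℝ}
    (hlam : 0 < lam) (hvmax : 0 ≤ vmax) (hM0 : 0 ≤ M)
    (hvar : ∀ w : V → E, ∑ i, w i = 0 → lam * ∑ i, ‖w i‖ ^ 2 ≤ ∑ e, ‖w (a e) - w (b e)‖ ^ 2)
    (hM : ∀ w : V → E, ∑ e, ‖w (a e) - w (b e)‖ ^ 2 ≤ M ^ 2 * ∑ i, ‖w i‖ ^ 2)
    (x v : V → ℝ → E) (hv : ∀ i t, 0 ≤ t → ‖v i t‖ ≤ vmax)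
    (hdyn : ∀ i t, 0 ≤ t →
      HasDerivAt (x i) (-(∑ j ∈ G.neighborFinset i, (x i t - x j t)) + v i t) t)
    (hR : Real.sqrt (Fintype.card V) * M * vmax / lam < R) :
    ∀ᶠ t in atTop, Real.sqrt (∑ e, ‖x (a e) t - x (b e) t‖ ^ 2) < R := by
  set g₀ := ∑ i, ‖disagreement (fun j => x j 0) i‖ ^ 2
  set C := Fintype.card V * vmax ^ 2 / lam
  have hlim : Tendsto (fun t => M ^ 2 * gronwallBound g₀ (-lam) C t) atTop
      (𝓝 ((Real.sqrt (Fintype.card V) * M * vmax / lam) ^ 2)) := by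
    convert (tendsto_gronwallBound_atTop (δ := g₀) (ε := C) (neg_lt_zero.2 hlam)).const_mul _
      using 2
    rw [div_pow, mul_pow, mul_pow, Real.sq_sqrt (Nat.cast_nonneg _)]
    simp only [C]
    field_simp
  have hR2 := pow_lt_pow_left₀ hR (by positivity) two_ne_zero
  filter_upwards [hlim.eventually_lt_const hR2, eventually_ge_atTop 0] with t hlt ht
  rw [Real.sqrt_lt' (hR.trans_le' (by positivity))]
  calc ∑ e, ‖x (a e) t - x (b e) t‖ ^ 2
      = ∑ e, ‖disagreement (fun j => x j t) (a e) - disagreement (fun j => x j t) (b e)‖ ^ 2 := by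
        simp_rw [disagreement_sub_disagreement]
    _ ≤ M ^ 2 * ∑ i, ‖disagreement (fun j => x j t) i‖ ^ 2 := hM _
    _ ≤ M ^ 2 * gronwallBound g₀ (-lam) C t := by
        gcongr; exact h.sum_norm_sq_disagreement_le hlam hvar x v hv hdyn ht
    _ < R ^ 2 := hlt

end SimpleGraph.EnumeratesEdges

theorem statement0_general
    (N m n : ℕ)
    (G : SimpleGraph (Fin N)) [DecidableRel G.Adj]
    (a b : Fin m → Fin N)
    (hab : ∀ e, G.Adj (a e) (b e))
    (huniq : ∀ u v : Fin N, G.Adj u v →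
      ∃! e : Fin m, (a e = u ∧ b e = v) ∨ (a e = v ∧ b e = u))
    (lam2 : ℝ) (hlam2 : 0 < lam2)
    (hvar : ∀ y : Fin N → ℝ, (∑ i, y i) = 0 →
      lam2 * (∑ i, (y i) ^ 2) ≤
        ∑ i, y i * ((incidenceMat a b * (incidenceMat a b)ᵀ).mulVec y i))
    (vmax : ℝ) (hvmax : 0 < vmax)
    (x v : Fin N → ℝ → EuclideanSpace ℝ (Fin n))
    (hv : ∀ i t, 0 ≤ t → ‖v i t‖ ≤ vmax)
    (hdyn : ∀ i t, 0 ≤ t →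
      HasDerivAt (x i) (-(∑ j ∈ G.neighborFinset i, (x i t - x j t)) + v i t) t)
    (R : ℝ)
    (hR : 2 * Real.sqrt N * ((N : ℝ) - 1) * matOpNorm (incidenceMat a b)ᵀ / lam2 ^ 2
      * vmax < R) :
    ∃ T : ℝ, 0 < T ∧ ∀ t, T ≤ t →
      Real.sqrt (∑ e : Fin m, ‖x (a e) t - x (b e) t‖ ^ 2) ≤ R := by
  have hE : G.EnumeratesEdges a b :=
    ⟨hab, fun u v huv => by simpa only [Sym2.eq_iff] using huniq u v huv⟩
  have hne : ∀ e, a e ≠ b e := fun e => (hab e).ne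
  obtain hm | ⟨⟨e0⟩⟩ := isEmpty_or_nonempty (Fin m)
  · have hM : matOpNorm (incidenceMat a b)ᵀ = 0 := by
      rw [matOpNorm, Subsingleton.elim (LinearMap.toContinuousLinearMap _) 0, norm_zero]
    refine ⟨1, one_pos, fun t _ => ?_⟩
    rw [hM, mul_zero, zero_div, zero_mul] at hR
    simpa using hR.le
  set M := matOpNorm (incidenceMat a b)ᵀ
  have hvar' : ∀ y : Fin N → ℝ, ∑ i, y i = 0 →
      lam2 * ∑ i, y i ^ 2 ≤ ∑ e, (y (a e) - y (b e)) ^ 2 :=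
    fun y hy => (hvar y hy).trans_eq (dotProduct_incidenceMat_mul_transpose_mulVec hne y)
  have hlam2_le : lam2 ≤ 2 * ((N : ℝ) - 1) := by
    simpa using hE.le_two_mul_card_sub_one hvar' (hne e0)
  have hradius : Real.sqrt N * M * vmax / lam2 ≤ 2 * Real.sqrt N * ((N : ℝ) - 1) * M / lam2 ^ 2
      * vmax := by
    have : 0 ≤ M := norm_nonneg _
    rw [div_le_iff₀ hlam2]
    calc Real.sqrt N * M * vmax = Real.sqrt N * M * vmax / lam2 ^ 2 * lam2 * lam2 := by
          field_simp
      _ ≤ Real.sqrt N * M * vmax / lam2 ^ 2 * (2 * ((N : ℝ) - 1)) * lam2 := by gcongr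
      _ = _ := by ring
  obtain ⟨T, hT⟩ := eventually_atTop.1 <| hE.eventually_sqrt_sum_norm_sq_sub_lt (M := M) hlam2
    hvmax.le (norm_nonneg _) (le_sum_norm_sq_sub_of_forall_real (κ := Fin n) hvar')
    (sum_norm_sq_sub_le_of_forall_real (κ := Fin n) (sum_sq_sub_le_matOpNorm_sq hne)) x v hv hdyn
    (by rw [Fintype.card_fin]; exact hradius.trans_lt hR)
  exact ⟨max T 1, lt_max_of_lt_right one_pos, fun t ht => (hT t (le_of_max_le_left ht)).le⟩

/-- ultimate boundedness of the edge-difference vector.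
`G` is a connected undirected graph on `N` vertices whose edges are enumerated
(without repetition) by the endpoint maps `a b : Fin m → Fin N`; `D = incidenceMat a b`
is its incidence matrix and `L = D * Dᵀ` its Laplacian.  `lam2` is the second
smallest Laplacian eigenvalue, characterized by positivity together with the
variational (Courant–Fischer) inequality on the orthogonal complement of the
all-ones vector.  If the agents obey `ẋᵢ = -∑_{j ∈ N(i)} (xᵢ - xⱼ) + vᵢ` with
`‖vᵢ(t)‖ ≤ vmax`, then for every `R̄ > K₂ vmax` there is a time `T > 0` after
which the stacked edge-difference vector `x̃(t)` satisfies `‖x̃(t)‖ ≤ R̄`. -/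
theorem statement0
    (N m n : ℕ)
    (G : SimpleGraph (Fin N)) [DecidableRel G.Adj]
    (hconn : G.Connected)
    (a b : Fin m → Fin N)
    (hab : ∀ e, G.Adj (a e) (b e))
    (huniq : ∀ u v : Fin N, G.Adj u v →
      ∃! e : Fin m, (a e = u ∧ b e = v) ∨ (a e = v ∧ b e = u))
    (lam2 : ℝ) (hlam2 : 0 < lam2)
    (hvar : ∀ y : Fin N → ℝ, (∑ i, y i) = 0 →
      lam2 * (∑ i, (y i) ^ 2) ≤
        ∑ i, y i * ((incidenceMat a b * (incidenceMat a b)ᵀ).mulVec y i))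
    (vmax : ℝ) (hvmax : 0 < vmax)
    (x v : Fin N → ℝ → EuclideanSpace ℝ (Fin n))
    (hv : ∀ i t, 0 ≤ t → ‖v i t‖ ≤ vmax)
    (hdyn : ∀ i t, 0 ≤ t →
      HasDerivAt (x i) (-(∑ j ∈ G.neighborFinset i, (x i t - x j t)) + v i t) t)
    (R : ℝ)
    (hR : 2 * Real.sqrt N * ((N : ℝ) - 1) * matOpNorm (incidenceMat a b)ᵀ / lam2 ^ 2
      * vmax < R) :
    ∃ T : ℝ, 0 < T ∧ ∀ t, T ≤ t →
      Real.sqrt (∑ e : Fin m, ‖x (a e) t - x (b e) t‖ ^ 2) ≤ R :=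
  statement0_general N m n G a b hab huniq lam2 hlam2 hvar vmax hvmax x v hv hdyn R hR
end

section
/- Let G be an undirected graph on N ≥ 2 vertices with edge set E and incidence matrix D(G), and let x = (x₁,…,x_N) ∈ ℝ^{Nn}. Let x^⊥ be the orthogonal projection of x onto the orthogonal complement of the diagonal subspace H = { x ∈ ℝ^{Nn} : x₁ = x₂ = … = x_N }, and let x̃ ∈ ℝ^{|E|n} be the stacked vector of edge differences x_i − x_j over {i,j} ∈ E. Then ‖x^⊥‖ ≥ (1/√(2(N−1))) ‖x̃‖. -/
/-!
Summed over all ordered pairs `(i, j)`, the squared differences `‖xᵢ - xⱼ‖²` equal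
`2N ‖x^⊥‖²`. Each edge of the graph accounts for two distinct ordered pairs, so
`‖x̃‖² ≤ N ‖x^⊥‖² ≤ 2(N - 1) ‖x^⊥‖²` once `N ≥ 2`.
-/

open Finset Function

section PairwiseDistances

variable {ι F : Type*} [Fintype ι] [NormedAddCommGroup F] [InnerProductSpace ℝ F]

theorem sum_sum_norm_sub_sq (y : ι → F) :
    ∑ i, ∑ j, ‖y i - y j‖ ^ 2 =
      2 * Fintype.card ι * ∑ i, ‖y i‖ ^ 2 - 2 * ‖∑ i, y i‖ ^ 2 := by
  have hinner : ∑ i, ∑ j, inner ℝ (y i) (y j) = ‖∑ i, y i‖ ^ 2 := by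
    rw [← real_inner_self_eq_norm_sq, sum_inner]
    simp_rw [inner_sum]
  simp only [norm_sub_sq_real, sum_add_distrib, sum_sub_distrib, ← mul_sum, sum_const,
    card_univ, nsmul_eq_mul, hinner]
  ring

theorem sum_sub_mean_eq_zero (x : ι → F) :
    ∑ i, (x i - (Fintype.card ι : ℝ)⁻¹ • ∑ j, x j) = 0 := by
  rcases isEmpty_or_nonempty ι with hι | hι
  · simp
  · rw [sum_sub_distrib, sum_const, card_univ, ← Nat.cast_smul_eq_nsmul ℝ, smul_smul,
      mul_inv_cancel₀ (Nat.cast_ne_zero.2 Fintype.card_ne_zero), one_smul, sub_self]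

theorem sum_sum_norm_sub_sq_eq_card_mul_sum_norm_sub_mean_sq (x : ι → F) :
    ∑ i, ∑ j, ‖x i - x j‖ ^ 2 =
      2 * Fintype.card ι * ∑ i, ‖x i - (Fintype.card ι : ℝ)⁻¹ • ∑ j, x j‖ ^ 2 := by
  have h := sum_sum_norm_sub_sq fun i => x i - (Fintype.card ι : ℝ)⁻¹ • ∑ j, x j
  rw [sum_sub_mean_eq_zero] at h
  simpa using h

end PairwiseDistances

theorem two_mul_sum_le_sum_sum_of_injective_sym2 {κ α : Type*} [Fintype κ] [Fintype α]
    (f : α → α → ℝ) (hf_nonneg : ∀ i j, 0 ≤ f i j) (hf_symm : ∀ i j, f i j = f j i)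
    (a b : κ → α) (hne : ∀ e, a e ≠ b e) (hinj : Injective fun e => s(a e, b e)) :
    2 * ∑ e, f (a e) (b e) ≤ ∑ i, ∑ j, f i j := by
  classical
  let φ : κ × Bool → α × α := fun p => if p.2 then (a p.1, b p.1) else (b p.1, a p.1)
  have hφ : Injective φ := by
    have hmk : ∀ p, s((φ p).1, (φ p).2) = s(a p.1, b p.1) := by
      rintro ⟨e, _ | _⟩ <;> simp [φ, Sym2.eq_swap]
    rintro ⟨e, s⟩ ⟨e', s'⟩ h
    obtain rfl : e = e' :=
      hinj (by simpa only [hmk] using congrArg (fun q : α × α => s(q.1, q.2)) h)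
    cases s <;> cases s' <;> simp_all [φ]
  calc 2 * ∑ e, f (a e) (b e) = ∑ p, uncurry f (φ p) := by
        simp [Fintype.sum_prod_type, φ, hf_symm, two_mul, sum_add_distrib]
    _ = ∑ q ∈ univ.image φ, uncurry f q := (sum_image hφ.injOn).symm
    _ ≤ ∑ q, uncurry f q := sum_le_univ_sum_of_nonneg fun q => hf_nonneg q.1 q.2
    _ = ∑ i, ∑ j, f i j := Fintype.sum_prod_type _

theorem statement2_general
    (N m n : ℕ) (hN : 2 ≤ N)
    (G : SimpleGraph (Fin N))
    (a b : Fin m → Fin N)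
    (hab : ∀ e, G.Adj (a e) (b e))
    (huniq : ∀ u v : Fin N, G.Adj u v →
      ∃! e : Fin m, (a e = u ∧ b e = v) ∨ (a e = v ∧ b e = u))
    (x : Fin N → EuclideanSpace ℝ (Fin n)) :
    (1 / Real.sqrt (2 * ((N : ℝ) - 1))) *
        Real.sqrt (∑ e : Fin m, ‖x (a e) - x (b e)‖ ^ 2) ≤
      Real.sqrt (∑ i : Fin N, ‖x i - (N : ℝ)⁻¹ • ∑ j : Fin N, x j‖ ^ 2) := by
  set S := ∑ i : Fin N, ‖x i - (N : ℝ)⁻¹ • ∑ j : Fin N, x j‖ ^ 2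
  set T := ∑ e : Fin m, ‖x (a e) - x (b e)‖ ^ 2
  have hinj : Injective fun e => s(a e, b e) := fun e e' h =>
    (huniq _ _ (hab e)).unique (Or.inl ⟨rfl, rfl⟩) (by rw [Sym2.eq_iff] at h; tauto)
  have hTS : 2 * T ≤ 2 * N * S := by
    have h := sum_sum_norm_sub_sq_eq_card_mul_sum_norm_sub_mean_sq x
    rw [Fintype.card_fin] at h
    exact h ▸ two_mul_sum_le_sum_sum_of_injective_sym2 (fun i j => ‖x i - x j‖ ^ 2)
      (fun _ _ => by positivity) (fun i j => by rw [norm_sub_rev]) a b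
      (fun e => (hab e).ne) hinj
  have hNR : (2 : ℝ) ≤ N := by exact_mod_cast hN
  have hS : 0 ≤ S := sum_nonneg fun _ _ => by positivity
  rw [one_div_mul_eq_div, div_le_iff₀ (Real.sqrt_pos.2 (by linarith)), ← Real.sqrt_mul hS]
  exact Real.sqrt_le_sqrt (by nlinarith)

/-- For an undirected graph on `N ≥ 2` vertices whose edges are
enumerated (without repetition) by the endpoint maps `a b : Fin m → Fin N`, and a
stacked vector `x = (x₁, …, x_N) ∈ ℝ^{Nn}`, the orthogonal projection
`x^⊥` of `x` onto the orthogonal complement of the diagonal subspace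
`H = {x : x₁ = ⋯ = x_N}` (i.e. `x^⊥ᵢ = xᵢ - (1/N) ∑ⱼ xⱼ`) satisfies
`‖x^⊥‖ ≥ (1/√(2(N-1))) ‖x̃‖`, where `x̃` is the stacked vector of the edge
differences `xᵢ - xⱼ` over the edges of the graph. -/
theorem statement2
    (N m n : ℕ) (hN : 2 ≤ N)
    (G : SimpleGraph (Fin N)) [DecidableRel G.Adj]
    (a b : Fin m → Fin N)
    (hab : ∀ e, G.Adj (a e) (b e))
    (huniq : ∀ u v : Fin N, G.Adj u v →
      ∃! e : Fin m, (a e = u ∧ b e = v) ∨ (a e = v ∧ b e = u))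
    (x : Fin N → EuclideanSpace ℝ (Fin n)) :
    (1 / Real.sqrt (2 * ((N : ℝ) - 1))) *
        Real.sqrt (∑ e : Fin m, ‖x (a e) - x (b e)‖ ^ 2) ≤
      Real.sqrt (∑ i : Fin N, ‖x i - (N : ℝ)⁻¹ • ∑ j : Fin N, x j‖ ^ 2) :=
  statement2_general N m n hN G a b hab huniq x
end

section
/- Let G be an undirected graph on N vertices with incidence matrix D(G) and Laplacian L(G) = D(G) D(G)^T. Let x, v ∈ ℝ^{Nn} with blocks x_i, v_i ∈ ℝⁿ and suppose ‖v_i‖ ≤ v_max for all i = 1,…,N. Then | ∑_{k=1}^{n} ⟨ c(x,k), L(G) c(v,k) ⟩ | ≤ √N ‖D(G)^T‖ ‖x̃‖ v_max, where c(·,k) is the k-th component vector and x̃ = D(G)^T x applied componentwise. -/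
open scoped BigOperators
open Matrix

/-!
Since `L = D Dᵀ`, the `k`-th term is `⟨Dᵀ c(x,k), Dᵀ c(v,k)⟩`, and `Dᵀ c(x,k)` lists the
`k`-th coordinates of the edge differences `x (a e) - x (b e)` (edges are not loops).
Cauchy–Schwarz over all (component, edge) pairs bounds the sum by
`‖x̃‖ (∑ₖ ‖Dᵀ c(v,k)‖²)^½`, and the operator norm gives
`∑ₖ ‖Dᵀ c(v,k)‖² ≤ ‖Dᵀ‖² ∑ᵢ ‖vᵢ‖² ≤ ‖Dᵀ‖² N vmax²`.
-/

open Finset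

/- Without `a e ≠ b e` the column of a loop holds a single `1`, not an edge difference. -/
lemma incidenceMat_transpose_mulVec_apply {N m : ℕ} {a b : Fin m → Fin N} {e : Fin m}
    (hne : a e ≠ b e) (w : Fin N → ℝ) : ((incidenceMat a b)ᵀ *ᵥ w) e = w (a e) - w (b e) := by
  simp [incidenceMat, mulVec, dotProduct, ite_mul, sum_ite, filter_eq', filter_ne', hne.symm,
    sub_eq_add_neg]

lemma matOpNorm_nonneg {N m : ℕ} (A : Matrix (Fin N) (Fin m) ℝ) : 0 ≤ matOpNorm A :=
  norm_nonneg _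

lemma sum_sq_mulVec_le {N m : ℕ} (A : Matrix (Fin m) (Fin N) ℝ) (w : Fin N → ℝ) :
    ∑ e, (A *ᵥ w) e ^ 2 ≤ matOpNorm A ^ 2 * ∑ i, w i ^ 2 := by
  have h := (LinearMap.toContinuousLinearMap (toEuclideanLin A)).le_opNorm (WithLp.toLp 2 w)
  simp only [LinearMap.coe_toContinuousLinearMap', toLpLin_toLp, toLin'_apply,
    EuclideanSpace.norm_eq, Real.norm_eq_abs, sq_abs] at h
  have := pow_le_pow_left₀ (Real.sqrt_nonneg _) h 2
  rwa [mul_pow, Real.sq_sqrt (by positivity), Real.sq_sqrt (by positivity)] at this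

lemma abs_sum_sum_mul_le {ι κ : Type*} [Fintype ι] [Fintype κ] (f g : ι → κ → ℝ) :
    |∑ i, ∑ j, f i j * g i j| ≤ √(∑ i, ∑ j, f i j ^ 2) * √(∑ i, ∑ j, g i j ^ 2) := by
  simp only [← sum_product']
  rw [← Real.sqrt_mul (sum_nonneg fun _ _ => sq_nonneg _)]
  exact Real.abs_le_sqrt (sum_mul_sq_le_sq_mul_sq _ _ _)

lemma sum_sq_eq_sum_norm_sq {ι : Type*} [Fintype ι] {n : ℕ} (y : ι → EuclideanSpace ℝ (Fin n)) :
    ∑ k, ∑ i, y i k ^ 2 = ∑ i, ‖y i‖ ^ 2 := by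
  simp only [EuclideanSpace.real_norm_sq_eq]
  exact sum_comm

lemma sqrt_sum_norm_sq_le {ι E : Type*} [Fintype ι] [SeminormedAddCommGroup E] {v : ι → E}
    {c : ℝ} (hv : ∀ i, ‖v i‖ ≤ c) : √(∑ i, ‖v i‖ ^ 2) ≤ √(Fintype.card ι) * c := by
  rcases isEmpty_or_nonempty ι with hι | ⟨⟨i₀⟩⟩
  · simp
  have hc : 0 ≤ c := (norm_nonneg _).trans (hv i₀)
  calc √(∑ i, ‖v i‖ ^ 2) ≤ √(∑ _i : ι, c ^ 2) := by gcongr with i; exact hv i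
    _ = √(Fintype.card ι) * c := by
      rw [sum_const, card_univ, nsmul_eq_mul, Real.sqrt_mul (Nat.cast_nonneg _), Real.sqrt_sq hc]

lemma abs_sum_mul_self_transpose_le {N m n : ℕ} (A : Matrix (Fin N) (Fin m) ℝ)
    (x v : Fin N → EuclideanSpace ℝ (Fin n)) :
    |∑ k, ∑ i, x i k * ((A * Aᵀ) *ᵥ fun j => v j k) i| ≤
      √(∑ k, ∑ e, (Aᵀ *ᵥ fun j => x j k) e ^ 2) * (matOpNorm Aᵀ * √(∑ i, ‖v i‖ ^ 2)) := by
  have hform : ∀ k, ∑ i, x i k * ((A * Aᵀ) *ᵥ fun j => v j k) i =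
      ∑ e, (Aᵀ *ᵥ fun j => x j k) e * (Aᵀ *ᵥ fun j => v j k) e := fun k => by
    change dotProduct _ _ = dotProduct _ _
    rw [← mulVec_mulVec, dotProduct_mulVec, ← mulVec_transpose]
  have hv : ∑ k, ∑ e, (Aᵀ *ᵥ fun j => v j k) e ^ 2 ≤ matOpNorm Aᵀ ^ 2 * ∑ i, ‖v i‖ ^ 2 := by
    rw [← sum_sq_eq_sum_norm_sq, mul_sum]
    exact sum_le_sum fun k _ => sum_sq_mulVec_le _ _
  calc _ ≤ √(∑ k, ∑ e, (Aᵀ *ᵥ fun j => x j k) e ^ 2) *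
          √(∑ k, ∑ e, (Aᵀ *ᵥ fun j => v j k) e ^ 2) := by
        simp only [hform]; exact abs_sum_sum_mul_le _ _
    _ ≤ √(∑ k, ∑ e, (Aᵀ *ᵥ fun j => x j k) e ^ 2) * √(matOpNorm Aᵀ ^ 2 * ∑ i, ‖v i‖ ^ 2) := by
        gcongr
    _ = _ := by rw [Real.sqrt_mul (sq_nonneg _), Real.sqrt_sq (matOpNorm_nonneg _)]

lemma sum_sq_incidenceMat_transpose_mulVec {N m n : ℕ} {a b : Fin m → Fin N}
    (hne : ∀ e, a e ≠ b e) (x : Fin N → EuclideanSpace ℝ (Fin n)) :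
    ∑ k, ∑ e, ((incidenceMat a b)ᵀ *ᵥ fun j => x j k) e ^ 2 = ∑ e, ‖x (a e) - x (b e)‖ ^ 2 := by
  simp only [incidenceMat_transpose_mulVec_apply (hne _)]
  exact sum_sq_eq_sum_norm_sq fun e => x (a e) - x (b e)

theorem statement4_general
    (N m n : ℕ)
    (G : SimpleGraph (Fin N))
    (a b : Fin m → Fin N)
    (hab : ∀ e, G.Adj (a e) (b e))
    (vmax : ℝ)
    (x v : Fin N → EuclideanSpace ℝ (Fin n))
    (hv : ∀ i, ‖v i‖ ≤ vmax) :
    |∑ k : Fin n, ∑ i : Fin N,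
        x i k * ((incidenceMat a b * (incidenceMat a b)ᵀ).mulVec (fun j => v j k) i)| ≤
      Real.sqrt N * matOpNorm (incidenceMat a b)ᵀ *
        Real.sqrt (∑ e : Fin m, ‖x (a e) - x (b e)‖ ^ 2) * vmax := by
  have hv_sum : √(∑ i, ‖v i‖ ^ 2) ≤ √N * vmax := by
    simpa using sqrt_sum_norm_sq_le hv
  calc _ ≤ √(∑ e, ‖x (a e) - x (b e)‖ ^ 2) *
        (matOpNorm (incidenceMat a b)ᵀ * √(∑ i, ‖v i‖ ^ 2)) := by
        rw [← sum_sq_incidenceMat_transpose_mulVec fun e => (hab e).ne]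
        exact abs_sum_mul_self_transpose_le _ x v
    _ ≤ √(∑ e, ‖x (a e) - x (b e)‖ ^ 2) * (matOpNorm (incidenceMat a b)ᵀ * (√N * vmax)) := by
        gcongr; exact matOpNorm_nonneg _
    _ = _ := by ring

/-- bound on the input term.  For an undirected graph on `N`
vertices with incidence matrix `D` and Laplacian `L = D Dᵀ`, and stacked vectors
`x, v ∈ ℝ^{Nn}` with `‖vᵢ‖ ≤ vmax`, one has
`|∑ₖ ⟨c(x,k), L c(v,k)⟩| ≤ √N ‖Dᵀ‖ ‖x̃‖ vmax`, where `c(·,k)` is the `k`-th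
component vector and `x̃` is the stacked edge-difference vector. -/
theorem statement4
    (N m n : ℕ)
    (G : SimpleGraph (Fin N)) [DecidableRel G.Adj]
    (a b : Fin m → Fin N)
    (hab : ∀ e, G.Adj (a e) (b e))
    (huniq : ∀ u v : Fin N, G.Adj u v →
      ∃! e : Fin m, (a e = u ∧ b e = v) ∨ (a e = v ∧ b e = u))
    (vmax : ℝ)
    (x v : Fin N → EuclideanSpace ℝ (Fin n))
    (hv : ∀ i, ‖v i‖ ≤ vmax) :
    |∑ k : Fin n, ∑ i : Fin N,
        x i k * ((incidenceMat a b * (incidenceMat a b)ᵀ).mulVec (fun j => v j k) i)| ≤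
      Real.sqrt N * matOpNorm (incidenceMat a b)ᵀ *
        Real.sqrt (∑ e : Fin m, ‖x (a e) - x (b e)‖ ^ 2) * vmax :=
  statement4_general N m n G a b hab vmax x v hv
end
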